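/- arXiv:1511.01408 — 2 statements merged into one kernel-verified Lean document; each statement's English description precedes it below -/
import Mathlib

section
/- A bounded linear operator A on a complex Banach space X is polaroid if and only if its dual operator A* on the dual space X* is polaroid. -/
open Metric Filter NormedSpace
open scoped Classical ENNReal

variable {X : Type*} [NormedAddCommGroup X] [NormedSpace ℂ X]

/-- The ascent of an operator `T`: the least `n ≥ 0` with `ker Tⁿ = ker Tⁿ⁺¹`,
and `⊤` if no such `n` exists. -/
noncomputable def ascent (T : X →L[ℂ] X) : ℕ∞ :=
  if ∃ n : ℕ, LinearMap.ker ((T ^ n : X →L[ℂ] X) : X →ₗ[ℂ] X) = LinearMap.ker ((T ^ (n + 1) : X →L[ℂ] X) : X →ₗ[ℂ] X) then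
    ((sInf {n : ℕ | LinearMap.ker ((T ^ n : X →L[ℂ] X) : X →ₗ[ℂ] X) = LinearMap.ker ((T ^ (n + 1) : X →L[ℂ] X) : X →ₗ[ℂ] X)} : ℕ) : ℕ∞)
  else ⊤

/-- The descent of an operator `T`: the least `n ≥ 0` with `ran Tⁿ = ran Tⁿ⁺¹`,
and `⊤` if no such `n` exists. -/
noncomputable def descent (T : X →L[ℂ] X) : ℕ∞ :=
  if ∃ n : ℕ, LinearMap.range ((T ^ n : X →L[ℂ] X) : X →ₗ[ℂ] X) = LinearMap.range ((T ^ (n + 1) : X →L[ℂ] X) : X →ₗ[ℂ] X) then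
    ((sInf {n : ℕ | LinearMap.range ((T ^ n : X →L[ℂ] X) : X →ₗ[ℂ] X) = LinearMap.range ((T ^ (n + 1) : X →L[ℂ] X) : X →ₗ[ℂ] X)} : ℕ) : ℕ∞)
  else ⊤

/-- `lam` is an isolated point of the set `s ⊆ ℂ`. -/
def IsIsolatedPointOf (lam : ℂ) (s : Set ℂ) : Prop :=
  lam ∈ s ∧ ∃ U ∈ nhds lam, U ∩ s = {lam}

/-- `lam` is a pole of (the resolvent of) `T`: an isolated point of the spectrum with
`asc(T - lam) = dsc(T - lam) < ∞`. -/
def IsPoleOf (T : X →L[ℂ] X) (lam : ℂ) : Prop :=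
  IsIsolatedPointOf lam (spectrum ℂ T) ∧
    ascent (T - lam • 1) = descent (T - lam • 1) ∧ ascent (T - lam • 1) ≠ ⊤

/-- `T` is polaroid: every isolated point of the spectrum is a pole. -/
def Polaroid (T : X →L[ℂ] X) : Prop :=
  ∀ lam : ℂ, IsIsolatedPointOf lam (spectrum ℂ T) → IsPoleOf T lam

/-- The dual (transpose) operator `A*` acting on the dual space `X*`:
`(dualOp A) φ = φ ∘ A`. -/
noncomputable def dualOp (A : X →L[ℂ] X) : StrongDual ℂ X →L[ℂ] StrongDual ℂ X :=
  (ContinuousLinearMap.compL ℂ X X ℂ).flip A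

/-!
A point `λ` is a pole of `T` exactly when, for some `p`, both `ker (T - λ)ⁿ` and `ran (T - λ)ⁿ`
are stationary from `n = p` on: once ascent and descent are both finite they coincide. On a Banach
space invertibility is stationarity at `p = 0`, so it suffices to transfer stationarity at a fixed
`p` between an operator `T` and its dual `T*`; this also gives `σ(T*) = σ(T)`.

Two of the four inclusions are annihilator arguments. For `ran T*ᵖ ⊆ ran T*ᵖ⁺¹`, the functional
`φ ∘ Tᵖ` factors continuously through `Tᵖ⁺¹` because `X = ran Tᵖ⁺¹ + ker Tᵖ`, which makes
`(x, k) ↦ Tᵖ⁺¹ x + k` an open map. For `ran Tᵖ ⊆ ran Tᵖ⁺¹`, the decomposition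
`X* = ran T* + ker T*ᵖ` shows in the same way that `T` is bounded below on the closure `C` of
`ran Tᵖ`; hence `T C` is closed, contains `C`, and iterating gives `ran Tᵖ ⊆ C ⊆ Tᵖ⁺¹ C`.
-/

open LinearMap

namespace Module.End

variable {R M : Type*} [Ring R] [AddCommGroup M] [Module R M] (f : Module.End R M)

/-- `asc f ≤ p` and `dsc f ≤ p`. -/
def KerRangeStableAt (p : ℕ) : Prop :=
  ker (f ^ p) = ker (f ^ (p + 1)) ∧ range (f ^ p) = range (f ^ (p + 1))

variable {f}

theorem ker_pow_le_ker_pow_succ (n : ℕ) : ker (f ^ n) ≤ ker (f ^ (n + 1)) := by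
  rw [pow_succ']; exact ker_le_ker_comp _ _

theorem range_pow_succ_le_range_pow (n : ℕ) : range (f ^ (n + 1)) ≤ range (f ^ n) := by
  rw [pow_succ]; exact range_comp_le_range _ _

theorem ker_pow_add_eq {k : ℕ} (h : ker (f ^ k) = ker (f ^ (k + 1))) (m : ℕ) :
    ker (f ^ (k + m)) = ker (f ^ k) := by
  induction m with
  | zero => rfl
  | succ m ih =>
    rw [← add_assoc, add_right_comm, pow_add, mul_eq_comp, ker_comp, ← h, ← ker_comp,
      ← mul_eq_comp, ← pow_add, ih]

theorem range_pow_add_eq {k : ℕ} (h : range (f ^ k) = range (f ^ (k + 1))) (m : ℕ) :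
    range (f ^ (k + m)) = range (f ^ k) := by
  induction m with
  | zero => rfl
  | succ m ih =>
    rw [← add_assoc, add_right_comm, add_comm, pow_add, mul_eq_comp, range_comp, ← h,
      ← range_comp, ← mul_eq_comp, ← pow_add, add_comm, ih]

theorem ker_pow_succ_eq_of_range_pow_succ_eq {n p : ℕ} (hr : range (f ^ n) = range (f ^ (n + 1)))
    (hk : ker (f ^ p) = ker (f ^ (p + 1))) : ker (f ^ n) = ker (f ^ (n + 1)) := by
  refine le_antisymm (ker_pow_le_ker_pow_succ n) fun x hx => ?_
  obtain ⟨y, hy⟩ : (f ^ n) x ∈ range (f ^ (n + p)) := by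
    rw [range_pow_add_eq hr]; exact mem_range_self _ x
  have hy' : y ∈ ker (f ^ (p + (n + 1))) := by
    rw [LinearMap.mem_ker, add_comm, add_right_comm, pow_succ', mul_apply, hy, ← mul_apply,
      ← pow_succ']
    exact hx
  rw [ker_pow_add_eq hk, ← ker_pow_add_eq hk n, add_comm] at hy'
  rw [LinearMap.mem_ker, ← hy, hy']

theorem range_pow_succ_eq_of_ker_pow_succ_eq {n p : ℕ} (hk : ker (f ^ n) = ker (f ^ (n + 1)))
    (hr : range (f ^ p) = range (f ^ (p + 1))) : range (f ^ n) = range (f ^ (n + 1)) := by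
  refine le_antisymm (fun y ⟨x, hx⟩ => ?_) (range_pow_succ_le_range_pow n)
  obtain ⟨z, hz⟩ : (f ^ (p + n)) x ∈ range (f ^ (p + (n + 1))) := by
    rw [range_pow_add_eq hr, ← range_pow_add_eq hr n]; exact mem_range_self _ x
  have hxz : x - f z ∈ ker (f ^ (p + n)) := by
    rw [LinearMap.mem_ker, map_sub, ← mul_apply, ← pow_succ, add_assoc, hz, sub_self]
  rw [add_comm, ker_pow_add_eq hk] at hxz
  refine ⟨z, ?_⟩
  rw [← hx, pow_succ, mul_apply, ← sub_eq_zero, ← map_sub]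
  exact sub_mem_comm_iff.mp hxz

theorem KerRangeStableAt.ker_iff_range {p : ℕ} (h : f.KerRangeStableAt p) (n : ℕ) :
    ker (f ^ n) = ker (f ^ (n + 1)) ↔ range (f ^ n) = range (f ^ (n + 1)) :=
  ⟨fun hk => range_pow_succ_eq_of_ker_pow_succ_eq hk h.2,
    fun hr => ker_pow_succ_eq_of_range_pow_succ_eq hr h.1⟩

theorem range_pow_sup_ker_pow_eq_top {p : ℕ} (h : range (f ^ p) = range (f ^ (p + 1))) (n : ℕ) :
    range (f ^ n) ⊔ ker (f ^ p) = ⊤ := by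
  refine Submodule.eq_top_iff'.2 fun x => ?_
  obtain ⟨y, hy⟩ : (f ^ p) x ∈ range (f ^ (p + n)) := by
    rw [range_pow_add_eq h]; exact mem_range_self _ x
  refine Submodule.mem_sup.2 ⟨(f ^ n) y, mem_range_self _ y, x - (f ^ n) y, ?_, add_sub_cancel _ _⟩
  rw [LinearMap.mem_ker, map_sub, ← mul_apply, ← pow_add, hy, sub_self]

theorem le_map_pow_of_le_map {N : Submodule R M} (h : N ≤ N.map f) (n : ℕ) : N ≤ N.map (f ^ n) := by
  induction n with
  | zero => rw [pow_zero, one_eq_id, Submodule.map_id]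
  | succ n ih =>
    rw [pow_succ', mul_eq_comp, Submodule.map_comp]
    exact h.trans (Submodule.map_mono ih)

end Module.End

theorem Submodule.mem_topologicalClosure_of_forall_dual {𝕜 E : Type*} [RCLike 𝕜]
    [NormedAddCommGroup E] [NormedSpace 𝕜 E] {M : Submodule 𝕜 E} {x : E}
    (h : ∀ φ : StrongDual 𝕜 E, (∀ m ∈ M, φ m = 0) → φ x = 0) : x ∈ M.topologicalClosure := by
  by_contra hx
  have : IsClosed (M.topologicalClosure : Set E) := M.isClosed_topologicalClosure
  obtain ⟨g, hg⟩ := SeparatingDual.exists_ne_zero (R := 𝕜) (x := M.topologicalClosure.mkQ x)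
    (by rwa [Ne, Submodule.mkQ_apply, Submodule.Quotient.mk_eq_zero])
  refine hg (h (g.comp M.topologicalClosure.mkQL) fun m hm => ?_)
  rw [ContinuousLinearMap.comp_apply, Submodule.mkQL_apply, Submodule.mkQ_apply,
    (Submodule.Quotient.mk_eq_zero _).2 (M.le_topologicalClosure hm), map_zero]

theorem ContinuousLinearMap.exists_comp_eq_of_surjective {𝕜 E F G : Type*}
    [NontriviallyNormedField 𝕜] [NormedAddCommGroup E] [NormedSpace 𝕜 E] [CompleteSpace E]
    [NormedAddCommGroup F] [NormedSpace 𝕜 F] [CompleteSpace F]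
    [NormedAddCommGroup G] [NormedSpace 𝕜 G]
    {W : E →L[𝕜] F} (hW : Function.Surjective W) (g : E →L[𝕜] G)
    (hker : ker (W : E →ₗ[𝕜] F) ≤ ker (g : E →ₗ[𝕜] G)) :
    ∃ h : F →L[𝕜] G, h.comp W = g := by
  obtain ⟨s, hs⟩ := (W : E →ₗ[𝕜] F).exists_rightInverse_of_surjective (LinearMap.range_eq_top.2 hW)
  have hsW : ∀ x, g (s (W x)) = g x := fun x => by
    rw [← sub_eq_zero, ← map_sub]
    refine hker (LinearMap.mem_ker.2 ?_)
    rw [map_sub, ← LinearMap.comp_apply, hs, LinearMap.id_apply, coe_coe, sub_self]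
  have hcont : Continuous ((g : E →ₗ[𝕜] G) ∘ₗ s) :=
    (W.isQuotientMap hW).continuous_iff.2 (by convert g.continuous using 1; ext x; exact hsW x)
  exact ⟨⟨_, hcont⟩, ext hsW⟩

theorem ContinuousLinearMap.isClosed_map_of_norm_le_mul_norm {𝕜 E F : Type*}
    [NontriviallyNormedField 𝕜] [NormedAddCommGroup E] [NormedSpace 𝕜 E] [CompleteSpace E]
    [NormedAddCommGroup F] [NormedSpace 𝕜 F] (f : E →L[𝕜] F) {C : Submodule 𝕜 E}
    (hC : IsClosed (C : Set E)) {M : ℝ} (hM : ∀ x ∈ C, ‖x‖ ≤ M * ‖f x‖) :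
    IsClosed (C.map (f : E →ₗ[𝕜] F) : Set F) := by
  have : CompleteSpace C := hC.completeSpace_coe
  have hanti : AntilipschitzWith M.toNNReal (f.comp C.subtypeL) :=
    (f.comp C.subtypeL).antilipschitz_of_bound fun x =>
      (hM x x.2).trans (mul_le_mul_of_nonneg_right (Real.le_coe_toNNReal M) (norm_nonneg _))
  convert hanti.isClosed_range (f.comp C.subtypeL).uniformContinuous using 1
  ext y
  simp

theorem ContinuousLinearMap.isUnit_iff_kerRangeStableAt_zero {𝕜 E : Type*}
    [NontriviallyNormedField 𝕜] [NormedAddCommGroup E] [NormedSpace 𝕜 E] [CompleteSpace E]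
    (T : E →L[𝕜] E) : IsUnit T ↔ Module.End.KerRangeStableAt (T : Module.End 𝕜 E) 0 := by
  rw [T.isUnit_iff_bijective, Module.End.KerRangeStableAt, pow_zero, zero_add, pow_one,
    Module.End.one_eq_id, LinearMap.ker_id, LinearMap.range_id, eq_comm, LinearMap.ker_eq_bot,
    eq_comm (a := ⊤), LinearMap.range_eq_top]
  rfl

section DualOperator

@[simp]
theorem dualOp_apply (A : X →L[ℂ] X) (φ : StrongDual ℂ X) (x : X) : dualOp A φ x = φ (A x) :=
  rfl

theorem dualOp_one : dualOp (1 : X →L[ℂ] X) = 1 :=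
  rfl

theorem dualOp_mul (A B : X →L[ℂ] X) : dualOp (A * B) = dualOp B * dualOp A :=
  rfl

theorem dualOp_pow (A : X →L[ℂ] X) (n : ℕ) : dualOp (A ^ n) = dualOp A ^ n := by
  induction n with
  | zero => exact dualOp_one
  | succ n ih => rw [pow_succ, dualOp_mul, ih]; exact (pow_succ' (dualOp A) n).symm

theorem dualOp_sub (A B : X →L[ℂ] X) : dualOp (A - B) = dualOp A - dualOp B :=
  map_sub (ContinuousLinearMap.compL ℂ X X ℂ).flip A B

theorem dualOp_smul (c : ℂ) (A : X →L[ℂ] X) : dualOp (c • A) = c • dualOp A :=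
  map_smul (ContinuousLinearMap.compL ℂ X X ℂ).flip c A

theorem dualOp_sub_smul_one (A : X →L[ℂ] X) (c : ℂ) : dualOp (A - c • 1) = dualOp A - c • 1 := by
  rw [dualOp_sub, dualOp_smul, dualOp_one]

variable (U V : X →L[ℂ] X)

theorem ker_dualOp_le_of_range_le (h : range (U : X →ₗ[ℂ] X) ≤ range (V : X →ₗ[ℂ] X)) :
    ker (dualOp V : StrongDual ℂ X →ₗ[ℂ] StrongDual ℂ X) ≤
      ker (dualOp U : StrongDual ℂ X →ₗ[ℂ] StrongDual ℂ X) := by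
  intro φ hφ
  rw [LinearMap.mem_ker, ContinuousLinearMap.coe_coe] at hφ ⊢
  ext x
  obtain ⟨y, hy⟩ := h (mem_range_self _ x)
  simp only [ContinuousLinearMap.coe_coe] at hy
  rw [dualOp_apply, ← hy, ← dualOp_apply, hφ]
  rfl

theorem ker_le_of_range_dualOp_le
    (h : range (dualOp U : StrongDual ℂ X →ₗ[ℂ] StrongDual ℂ X) ≤
      range (dualOp V : StrongDual ℂ X →ₗ[ℂ] StrongDual ℂ X)) :
    ker (V : X →ₗ[ℂ] X) ≤ ker (U : X →ₗ[ℂ] X) := by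
  intro x hx
  rw [LinearMap.mem_ker, ContinuousLinearMap.coe_coe] at hx ⊢
  refine SeparatingDual.eq_zero_of_forall_dual_eq_zero (R := ℂ) fun φ => ?_
  obtain ⟨χ, hχ⟩ := h (mem_range_self _ φ)
  rw [ContinuousLinearMap.coe_coe, ContinuousLinearMap.coe_coe] at hχ
  rw [← dualOp_apply, ← hχ, dualOp_apply, hx, map_zero]

theorem range_le_topologicalClosure_of_ker_dualOp_le
    (h : ker (dualOp V : StrongDual ℂ X →ₗ[ℂ] StrongDual ℂ X) ≤
      ker (dualOp U : StrongDual ℂ X →ₗ[ℂ] StrongDual ℂ X)) :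
    range (U : X →ₗ[ℂ] X) ≤ (range (V : X →ₗ[ℂ] X)).topologicalClosure := by
  rintro _ ⟨x, rfl⟩
  refine Submodule.mem_topologicalClosure_of_forall_dual fun φ hφ => ?_
  have hVφ : dualOp V φ = 0 := ContinuousLinearMap.ext fun y => hφ _ (mem_range_self _ y)
  have hUφ : dualOp U φ = 0 := h hVφ
  exact DFunLike.congr_fun hUφ x

theorem exists_norm_le_mul_norm_of_range_dualOp_sup_eq_top {K : Submodule ℂ (StrongDual ℂ X)}
    (hK : IsClosed (K : Set (StrongDual ℂ X)))
    (hsup : range (dualOp V : StrongDual ℂ X →ₗ[ℂ] StrongDual ℂ X) ⊔ K = ⊤) :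
    ∃ M : ℝ, ∀ x : X, (∀ k ∈ K, k x = 0) → ‖x‖ ≤ M * ‖V x‖ := by
  have : CompleteSpace K := hK.completeSpace_coe
  set W : StrongDual ℂ X × K →L[ℂ] StrongDual ℂ X := (dualOp V).coprod K.subtypeL
  have hW : Function.Surjective W := by
    intro φ
    obtain ⟨_, ⟨ψ, rfl⟩, k, hk, hφ⟩ := Submodule.mem_sup.1 (hsup ▸ Submodule.mem_top (x := φ))
    exact ⟨(ψ, ⟨k, hk⟩), hφ⟩
  obtain ⟨M, hM0, hM⟩ := ContinuousLinearMap.exists_preimage_norm_le (𝕜 := ℂ)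
    (E := StrongDual ℂ X × K) (F := StrongDual ℂ X) W hW
  refine ⟨M, fun x hx => ?_⟩
  obtain ⟨φ, hφ1, hφx⟩ := exists_dual_vector'' ℂ x
  obtain ⟨⟨ψ, k⟩, hψk, hnorm⟩ := hM φ
  have hφψ : φ x = ψ (V x) := by
    rw [← hψk]
    simp [W, hx k k.2]
  calc ‖x‖ = ‖φ x‖ := by simp [hφx]
    _ = ‖ψ (V x)‖ := by rw [hφψ]
    _ ≤ ‖ψ‖ * ‖V x‖ := ψ.le_opNorm _
    _ ≤ M * ‖V x‖ := by
      gcongr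
      calc ‖ψ‖ ≤ ‖(ψ, k)‖ := norm_fst_le (ψ, k)
        _ ≤ M * ‖φ‖ := hnorm
        _ ≤ M := mul_le_of_le_one_right hM0.le hφ1

end DualOperator

section Banach

variable [CompleteSpace X]

theorem range_dualOp_le_of_range_sup_ker_eq_top (U V : X →L[ℂ] X)
    (hsup : range (V : X →ₗ[ℂ] X) ⊔ ker (U : X →ₗ[ℂ] X) = ⊤)
    (hker : ker ((U * V : X →L[ℂ] X) : X →ₗ[ℂ] X) ≤ ker (U : X →ₗ[ℂ] X)) :
    range (dualOp U : StrongDual ℂ X →ₗ[ℂ] StrongDual ℂ X) ≤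
      range (dualOp V : StrongDual ℂ X →ₗ[ℂ] StrongDual ℂ X) := by
  rintro _ ⟨φ, rfl⟩
  set K := ker (U : X →ₗ[ℂ] X)
  have : CompleteSpace K := U.isClosed_ker.completeSpace_coe
  set W : X × K →L[ℂ] X := V.coprod K.subtypeL
  have hW : Function.Surjective W := by
    intro y
    obtain ⟨_, ⟨x, rfl⟩, k, hk, hy⟩ := Submodule.mem_sup.1 (hsup ▸ Submodule.mem_top (x := y))
    exact ⟨(x, ⟨k, hk⟩), hy⟩
  have hWker : ker (W : X × K →ₗ[ℂ] X) ≤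
      ker (((φ.comp U).comp (ContinuousLinearMap.fst ℂ X K)) : X × K →ₗ[ℂ] ℂ) := by
    rintro ⟨x, k⟩ hxk
    have hVx : V x = -k := eq_neg_of_add_eq_zero_left hxk
    have hx : x ∈ ker ((U * V : X →L[ℂ] X) : X →ₗ[ℂ] X) := by
      change U (V x) = 0
      rw [hVx, map_neg, neg_eq_zero]
      exact k.2
    have hUx : U x = 0 := hker hx
    change φ (U x) = 0
    rw [hUx, map_zero]
  obtain ⟨χ, hχ⟩ := W.exists_comp_eq_of_surjective hW _ hWker
  refine ⟨χ, ContinuousLinearMap.ext fun x => ?_⟩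
  simpa [W] using DFunLike.congr_fun hχ (x, 0)

theorem range_pow_le_range_pow_succ_of_dualOp (f : X →L[ℂ] X) {p : ℕ}
    (hsup : range (dualOp f : StrongDual ℂ X →ₗ[ℂ] StrongDual ℂ X) ⊔
      ker (dualOp (f ^ p) : StrongDual ℂ X →ₗ[ℂ] StrongDual ℂ X) = ⊤)
    (hker : ker (dualOp (f ^ (p + 1)) : StrongDual ℂ X →ₗ[ℂ] StrongDual ℂ X) ≤
      ker (dualOp (f ^ p) : StrongDual ℂ X →ₗ[ℂ] StrongDual ℂ X)) :
    range ((f ^ p : X →L[ℂ] X) : X →ₗ[ℂ] X) ≤ range ((f ^ (p + 1) : X →L[ℂ] X) : X →ₗ[ℂ] X) := by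
  set C := (range ((f ^ p : X →L[ℂ] X) : X →ₗ[ℂ] X)).topologicalClosure
  obtain ⟨M, hM⟩ := exists_norm_le_mul_norm_of_range_dualOp_sup_eq_top f
    (ContinuousLinearMap.isClosed_ker _) hsup
  have hbelow : ∀ x ∈ C, ‖x‖ ≤ M * ‖f x‖ := fun x hx => hM x fun k hk => by
    refine Submodule.topologicalClosure_minimal _ ?_ k.isClosed_ker hx
    rintro _ ⟨y, rfl⟩
    exact DFunLike.congr_fun (LinearMap.mem_ker.1 hk) y
  have hclosed := f.isClosed_map_of_norm_le_mul_norm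
    (Submodule.isClosed_topologicalClosure _) hbelow
  have hC : C ≤ C.map (f : X →ₗ[ℂ] X) := by
    refine Submodule.topologicalClosure_minimal _
      ((range_le_topologicalClosure_of_ker_dualOp_le _ _ hker).trans ?_) hclosed
    refine Submodule.topologicalClosure_minimal _ ?_ hclosed
    rintro _ ⟨x, rfl⟩
    refine ⟨(f ^ p) x, Submodule.le_topologicalClosure _ (mem_range_self _ x), ?_⟩
    rw [pow_succ']
    rfl
  calc range ((f ^ p : X →L[ℂ] X) : X →ₗ[ℂ] X) ≤ C := Submodule.le_topologicalClosure _
    _ ≤ C.map ((f : X →ₗ[ℂ] X) ^ (p + 1)) := Module.End.le_map_pow_of_le_map hC (p + 1)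
    _ ≤ _ := by rw [← ContinuousLinearMap.toLinearMap_pow]; exact LinearMap.map_le_range

theorem kerRangeStableAt_dualOp_iff (f : X →L[ℂ] X) (p : ℕ) :
    Module.End.KerRangeStableAt (dualOp f : Module.End ℂ (StrongDual ℂ X)) p ↔
      Module.End.KerRangeStableAt (f : Module.End ℂ X) p := by
  constructor
  · rintro ⟨hk, hr⟩
    refine ⟨le_antisymm (Module.End.ker_pow_le_ker_pow_succ p) ?_,
      le_antisymm ?_ (Module.End.range_pow_succ_le_range_pow p)⟩
    · simpa only [ContinuousLinearMap.toLinearMap_pow] using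
        ker_le_of_range_dualOp_le (f ^ p) (f ^ (p + 1))
          (by simpa only [dualOp_pow, ContinuousLinearMap.toLinearMap_pow] using hr.le)
    · simpa only [ContinuousLinearMap.toLinearMap_pow] using
        range_pow_le_range_pow_succ_of_dualOp f
          (by simpa only [dualOp_pow, ContinuousLinearMap.toLinearMap_pow, pow_one] using
            Module.End.range_pow_sup_ker_pow_eq_top hr 1)
          (by simpa only [dualOp_pow, ContinuousLinearMap.toLinearMap_pow] using hk.ge)
  · rintro ⟨hk, hr⟩
    refine ⟨le_antisymm (Module.End.ker_pow_le_ker_pow_succ p) ?_,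
      le_antisymm ?_ (Module.End.range_pow_succ_le_range_pow p)⟩
    · simpa only [dualOp_pow, ContinuousLinearMap.toLinearMap_pow] using
        ker_dualOp_le_of_range_le (f ^ p) (f ^ (p + 1))
          (by simpa only [ContinuousLinearMap.toLinearMap_pow] using hr.le)
    · simpa only [dualOp_pow, ContinuousLinearMap.toLinearMap_pow] using
        range_dualOp_le_of_range_sup_ker_eq_top (f ^ p) (f ^ (p + 1))
          (by simpa only [ContinuousLinearMap.toLinearMap_pow] using
            Module.End.range_pow_sup_ker_pow_eq_top hr (p + 1))
          (by simpa only [← pow_add, ContinuousLinearMap.toLinearMap_pow] using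
            (Module.End.ker_pow_add_eq hk (p + 1)).le)

end Banach

theorem isUnit_dualOp_iff [CompleteSpace X] (T : X →L[ℂ] X) : IsUnit (dualOp T) ↔ IsUnit T := by
  rw [ContinuousLinearMap.isUnit_iff_kerRangeStableAt_zero,
    ContinuousLinearMap.isUnit_iff_kerRangeStableAt_zero, kerRangeStableAt_dualOp_iff]

theorem spectrum_dualOp [CompleteSpace X] (A : X →L[ℂ] X) :
    spectrum ℂ (dualOp A) = spectrum ℂ A := by
  ext c
  rw [spectrum.mem_iff, spectrum.mem_iff, Algebra.algebraMap_eq_smul_one,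
    Algebra.algebraMap_eq_smul_one, ← dualOp_one, ← dualOp_smul, ← dualOp_sub, isUnit_dualOp_iff]

theorem ascent_eq_descent_and_ne_top_iff (T : X →L[ℂ] X) :
    ascent T = descent T ∧ ascent T ≠ ⊤ ↔
      ∃ p, Module.End.KerRangeStableAt (T : Module.End ℂ X) p := by
  simp only [ascent, descent, ContinuousLinearMap.toLinearMap_pow]
  constructor
  · rintro ⟨heq, hne⟩
    split_ifs at heq hne with hk hr
    · exact ⟨_, Nat.sInf_mem hk, ENat.natCast_inj.1 heq ▸ Nat.sInf_mem hr⟩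
    · exact absurd heq (ENat.natCast_ne_top _)
    all_goals exact absurd rfl hne
  · rintro ⟨p, hp⟩
    rw [if_pos ⟨p, hp.1⟩, if_pos ⟨p, hp.2⟩]
    refine ⟨?_, ENat.natCast_ne_top _⟩
    congr 2
    exact Set.ext hp.ker_iff_range

theorem isPoleOf_dualOp_iff [CompleteSpace X] (A : X →L[ℂ] X) (c : ℂ) :
    IsPoleOf (dualOp A) c ↔ IsPoleOf A c := by
  rw [IsPoleOf, IsPoleOf, spectrum_dualOp, ← dualOp_sub_smul_one,
    ascent_eq_descent_and_ne_top_iff, ascent_eq_descent_and_ne_top_iff]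
  simp only [kerRangeStableAt_dualOp_iff]

/-- An operator `A` on a complex Banach space is polaroid if and only if its dual
operator `A*` on the dual space `X*` is polaroid. -/
theorem polaroid_iff_dualOp_polaroid
    {X : Type*} [NormedAddCommGroup X] [NormedSpace ℂ X] [CompleteSpace X]
    (A : X →L[ℂ] X) :
    Polaroid A ↔ Polaroid (dualOp A) := by
  simp only [Polaroid, spectrum_dualOp, isPoleOf_dualOp_iff]
end

section
/- Let A be a bounded linear operator on a complex Banach space X and let λ be an isolated point of σ(A). Then λ is a pole of A (i.e., asc(A−λ) = dsc(A−λ) < ∞) if and only if there exists an integer p ≥ 1 such that H_0(A−λ) = ker(A−λ)^p. -/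
open Metric Filter NormedSpace
open scoped Classical ENNReal

variable {X : Type*} [NormedAddCommGroup X] [NormedSpace ℂ X]

/-- The quasinilpotent part `H₀(T) = {x : ‖Tⁿ x‖^(1/n) → 0}` of `T`. -/
def H0set (T : X →L[ℂ] X) : Set X :=
  {x : X | Tendsto (fun n : ℕ => ‖(T ^ n) x‖ ^ (1 / (n : ℝ))) atTop (nhds 0)}

/-!
Write `T = A - λ` and `R` for the resolvent of `A`. If `ker T^q = ker T^(q+1)` and
`ran T^q = ran T^(q+1)`, then `T` induces a bijection of the Banach space `X ⧸ ker T^q`, which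
is bounded below by the open mapping theorem. Hence `dist(x, ker T^q) ≤ Cⁿ ‖Tⁿ x‖`, so every
`x ∈ H₀(T)` lies in `ker T^q`.

Conversely, let `P` and `S` be `(2πi)⁻¹` times the integrals of `R(z)` and `(z - λ)⁻¹ R(z)` over
a small circle around `λ`. Then `T S = P - 1`, and `Tⁿ P = (2πi)⁻¹ ∮ (z - λ)ⁿ R(z) dz` does not
depend on the radius `ρ`, so `‖Tⁿ P‖ ≤ C_ρ ρⁿ` for every small `ρ > 0`. Hence `ran P ⊆ H₀(T)` and
`X = H₀(T) + ran T`. If `H₀(T) = ker T^p`, this gives `ran T^p = ran T^(p+1)`, and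
`ker T^(p+1) ⊆ H₀(T)` gives `ker T^p = ker T^(p+1)`. Finite ascent and descent always coincide,
because `ker Tⁿ = ker Tⁿ⁺¹` iff `ker T ∩ ran Tⁿ = 0`, and `ran Tⁿ = ran Tⁿ⁺¹` iff
`ran T + ker Tⁿ = X`.
-/

open Set Topology

namespace Module.End

variable {R M : Type*} [Ring R] [AddCommGroup M] [Module R M] (f : Module.End R M)

lemma comap_ker_pow (n : ℕ) :
    (LinearMap.ker (f ^ n)).comap f = LinearMap.ker (f ^ (n + 1)) := by
  rw [pow_succ, Module.End.mul_eq_comp, LinearMap.ker_comp]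

lemma map_range_pow (n : ℕ) :
    (LinearMap.range (f ^ n)).map f = LinearMap.range (f ^ (n + 1)) := by
  rw [pow_succ', Module.End.mul_eq_comp, LinearMap.range_comp]

variable {f}

lemma ker_pow_eq_of_le {m n : ℕ} (h : LinearMap.ker (f ^ m) = LinearMap.ker (f ^ (m + 1)))
    (hmn : m ≤ n) : LinearMap.ker (f ^ n) = LinearMap.ker (f ^ m) := by
  induction n, hmn using Nat.le_induction with
  | base => rfl
  | succ n _ ih => rw [← comap_ker_pow, ih, comap_ker_pow, h]

lemma range_pow_eq_of_le {m n : ℕ} (h : LinearMap.range (f ^ m) = LinearMap.range (f ^ (m + 1)))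
    (hmn : m ≤ n) : LinearMap.range (f ^ n) = LinearMap.range (f ^ m) := by
  induction n, hmn using Nat.le_induction with
  | base => rfl
  | succ n _ ih => rw [← map_range_pow, ih, map_range_pow, h]

lemma ker_pow_eq_ker_pow_succ_iff_disjoint (n : ℕ) :
    LinearMap.ker (f ^ n) = LinearMap.ker (f ^ (n + 1)) ↔
      Disjoint (LinearMap.ker f) (LinearMap.range (f ^ n)) := by
  rw [Submodule.disjoint_def]
  constructor
  · rintro h _ hy ⟨x, rfl⟩
    rw [LinearMap.mem_ker, ← Module.End.mul_apply, ← pow_succ'] at hy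
    rwa [← LinearMap.mem_ker, h]
  · intro h
    refine le_antisymm (f.iterateKer.monotone n.le_succ) fun x hx => ?_
    rw [LinearMap.mem_ker, pow_succ', Module.End.mul_apply] at hx
    exact h _ hx (LinearMap.mem_range_self _ x)

lemma range_pow_eq_range_pow_succ_iff_sup_eq_top (n : ℕ) :
    LinearMap.range (f ^ n) = LinearMap.range (f ^ (n + 1)) ↔
      LinearMap.range f ⊔ LinearMap.ker (f ^ n) = ⊤ := by
  rw [pow_succ, Module.End.mul_eq_comp, LinearMap.range_comp, LinearMap.range_eq_map]
  constructor
  · intro h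
    rw [← Submodule.comap_map_eq, ← h, Submodule.comap_map_eq, top_sup_eq]
  · intro h
    rw [← h, Submodule.map_sup, LinearMap.le_ker_iff_map.1 le_rfl, sup_bot_eq]

lemma ker_pow_eq_ker_pow_succ_of_range {m d : ℕ}
    (hker : LinearMap.ker (f ^ m) = LinearMap.ker (f ^ (m + 1)))
    (hran : LinearMap.range (f ^ d) = LinearMap.range (f ^ (d + 1))) :
    LinearMap.ker (f ^ d) = LinearMap.ker (f ^ (d + 1)) := by
  have hk : LinearMap.ker (f ^ max m d) = LinearMap.ker (f ^ (max m d + 1)) :=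
    (ker_pow_eq_of_le hker (le_max_left m d)).trans
      (ker_pow_eq_of_le hker ((le_max_left m d).trans (Nat.le_succ _))).symm
  rw [ker_pow_eq_ker_pow_succ_iff_disjoint] at hk ⊢
  rwa [range_pow_eq_of_le hran (le_max_right m d)] at hk

lemma range_pow_eq_range_pow_succ_of_ker {m d : ℕ}
    (hker : LinearMap.ker (f ^ m) = LinearMap.ker (f ^ (m + 1)))
    (hran : LinearMap.range (f ^ d) = LinearMap.range (f ^ (d + 1))) :
    LinearMap.range (f ^ m) = LinearMap.range (f ^ (m + 1)) := by
  have hr : LinearMap.range (f ^ max m d) = LinearMap.range (f ^ (max m d + 1)) :=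
    (range_pow_eq_of_le hran (le_max_right m d)).trans
      (range_pow_eq_of_le hran ((le_max_right m d).trans (Nat.le_succ _))).symm
  rw [range_pow_eq_range_pow_succ_iff_sup_eq_top] at hr ⊢
  rwa [ker_pow_eq_of_le hker (le_max_left m d)] at hr

end Module.End

open Module.End

lemma ite_natCast_sInf_le_iff {p : ℕ → Prop} (hp : ∀ m n, p m → m ≤ n → p n) (n : ℕ) :
    (if ∃ k, p k then ((sInf {k | p k} : ℕ) : ℕ∞) else ⊤) ≤ n ↔ p n := by
  split_ifs with h
  · rw [Nat.cast_le]
    exact ⟨fun hle => hp _ _ (Nat.sInf_mem h) hle, fun hn => Nat.sInf_le hn⟩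
  · simp only [top_le_iff, ENat.natCast_ne_top, false_iff]
    exact fun hn => h ⟨n, hn⟩

lemma ascent_le_iff (T : X →L[ℂ] X) (n : ℕ) :
    ascent T ≤ n ↔
      LinearMap.ker ((T : X →ₗ[ℂ] X) ^ n) = LinearMap.ker ((T : X →ₗ[ℂ] X) ^ (n + 1)) := by
  simp only [ascent, ContinuousLinearMap.toLinearMap_pow]
  refine ite_natCast_sInf_le_iff (fun m k hm hmk => ?_) n
  exact (ker_pow_eq_of_le hm hmk).trans (ker_pow_eq_of_le hm (hmk.trans k.le_succ)).symm

lemma descent_le_iff (T : X →L[ℂ] X) (n : ℕ) :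
    descent T ≤ n ↔
      LinearMap.range ((T : X →ₗ[ℂ] X) ^ n) = LinearMap.range ((T : X →ₗ[ℂ] X) ^ (n + 1)) := by
  simp only [descent, ContinuousLinearMap.toLinearMap_pow]
  refine ite_natCast_sInf_le_iff (fun m k hm hmk => ?_) n
  exact (range_pow_eq_of_le hm hmk).trans (range_pow_eq_of_le hm (hmk.trans k.le_succ)).symm

lemma ascent_eq_descent_of_le {T : X →L[ℂ] X} {m n : ℕ} (ha : ascent T ≤ m)
    (hd : descent T ≤ n) : ascent T = descent T := by
  obtain ⟨a, ha'⟩ := ENat.ne_top_iff_exists.1 (ne_top_of_le_ne_top (ENat.natCast_ne_top m) ha)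
  obtain ⟨d, hd'⟩ := ENat.ne_top_iff_exists.1 (ne_top_of_le_ne_top (ENat.natCast_ne_top n) hd)
  have hker := (ascent_le_iff T a).1 ha'.ge
  have hran := (descent_le_iff T d).1 hd'.ge
  apply le_antisymm
  · rw [← hd', ascent_le_iff]
    exact ker_pow_eq_ker_pow_succ_of_range hker hran
  · rw [← ha', descent_le_iff]
    exact range_pow_eq_range_pow_succ_of_ker hker hran

lemma tendsto_rpow_one_div_nhds_zero_iff {a : ℕ → ℝ} (ha : ∀ n, 0 ≤ a n) :
    Tendsto (fun n : ℕ => a n ^ (1 / (n : ℝ))) atTop (𝓝 0) ↔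
      ∀ ρ > 0, ∀ᶠ n in atTop, a n ≤ ρ ^ n := by
  have hroot : ∀ {ρ : ℝ} {n : ℕ}, 0 ≤ ρ → 1 ≤ n → (a n ^ (1 / (n : ℝ)) ≤ ρ ↔ a n ≤ ρ ^ n) :=
    fun hρ hn => by
      rw [one_div, Real.rpow_inv_le_iff_of_pos (ha _) hρ (by positivity), Real.rpow_natCast]
  constructor
  · intro h ρ hρ
    filter_upwards [h.eventually (ge_mem_nhds hρ), eventually_ge_atTop 1] with n hn h1
    exact (hroot hρ.le h1).1 hn
  · intro h
    refine tendsto_order.2 ⟨fun b hb => Eventually.of_forall fun n =>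
      hb.trans_le (Real.rpow_nonneg (ha n) _), fun ε hε => ?_⟩
    filter_upwards [h (ε / 2) (half_pos hε), eventually_ge_atTop 1] with n hn h1
    exact ((hroot (half_pos hε).le h1).2 hn).trans_lt (half_lt_self hε)

lemma eventually_le_pow_of_le_mul_pow {a : ℕ → ℝ}
    (h : ∀ᶠ ρ in 𝓝[>] 0, ∃ C, ∀ n, a n ≤ C * ρ ^ n) :
    ∀ ρ > 0, ∀ᶠ n in atTop, a n ≤ ρ ^ n := by
  intro ρ hρ
  obtain ⟨ρ', ⟨C, hC⟩, hρ'0, hρ'⟩ := (h.and (Ioc_mem_nhdsGT (half_pos hρ))).exists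
  filter_upwards [(tendsto_pow_atTop_atTop_of_one_lt one_lt_two).eventually_ge_atTop C] with n hn
  calc a n ≤ C * ρ' ^ n := hC n
    _ ≤ 2 ^ n * (ρ / 2) ^ n := by gcongr
    _ = ρ ^ n := by rw [← mul_pow, mul_div_cancel₀ ρ two_ne_zero]

lemma mem_H0set_iff {T : X →L[ℂ] X} {x : X} :
    x ∈ H0set T ↔ ∀ ρ > 0, ∀ᶠ n in atTop, ‖(T ^ n) x‖ ≤ ρ ^ n :=
  tendsto_rpow_one_div_nhds_zero_iff fun _ => norm_nonneg _

lemma ker_pow_subset_H0set (T : X →L[ℂ] X) (p : ℕ) :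
    (LinearMap.ker ((T : X →ₗ[ℂ] X) ^ p) : Set X) ⊆ H0set T := by
  intro x hx
  have hx' : (T ^ p) x = 0 := by simpa [← ContinuousLinearMap.toLinearMap_pow] using hx
  refine mem_H0set_iff.2 fun ρ hρ => ?_
  filter_upwards [eventually_ge_atTop p] with n hn
  rw [← Nat.sub_add_cancel hn, pow_add, mul_apply_eq_comp, hx', map_zero, norm_zero]
  positivity

lemma exists_norm_mkQ_le_mul_norm_mkQ_apply {𝕜 E : Type*} [NontriviallyNormedField 𝕜]
    [NormedAddCommGroup E] [NormedSpace 𝕜 E] [CompleteSpace E] (T : E →L[𝕜] E)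
    {N : Submodule 𝕜 E} [IsClosed (N : Set E)] (hcomap : N.comap (T : E →ₗ[𝕜] E) = N)
    (hsup : LinearMap.range (T : E →ₗ[𝕜] E) ⊔ N = ⊤) :
    ∃ C ≥ 0, ∀ x, ‖N.mkQ x‖ ≤ C * ‖N.mkQ (T x)‖ := by
  let Tq : (E ⧸ N) →L[𝕜] (E ⧸ N) :=
    N.liftQL (N.mkQL.comp T) fun x hx => by
      rw [← hcomap] at hx
      simpa using hx
  have hTq : ∀ x, Tq (N.mkQ x) = N.mkQ (T x) := fun x => rfl
  have hinj : Function.Injective Tq := by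
    refine (injective_iff_map_eq_zero Tq).2 fun y hy => ?_
    induction y using Submodule.Quotient.induction_on with
    | H x =>
      rw [← Submodule.mkQ_apply, hTq, Submodule.mkQ_apply,
        Submodule.Quotient.mk_eq_zero] at hy
      rw [Submodule.Quotient.mk_eq_zero, ← hcomap]
      exact hy
  have hsurj : Function.Surjective Tq := by
    intro y
    induction y using Submodule.Quotient.induction_on with
    | H x =>
      obtain ⟨_, ⟨u, rfl⟩, v, hv, hx⟩ :=
        Submodule.mem_sup.1 (hsup ▸ Submodule.mem_top : x ∈ _)
      refine ⟨N.mkQ u, ?_⟩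
      rw [hTq, Submodule.mkQ_apply, ← hx, Submodule.Quotient.mk_add,
        (Submodule.Quotient.mk_eq_zero N).2 hv, add_zero]
      rfl
  let e := ContinuousLinearEquiv.ofBijective Tq (LinearMap.ker_eq_bot.2 hinj)
    (LinearMap.range_eq_top.2 hsurj)
  refine ⟨‖(e.symm : (E ⧸ N) →L[𝕜] (E ⧸ N))‖, norm_nonneg _, fun x => ?_⟩
  calc ‖N.mkQ x‖ = ‖e.symm (e (N.mkQ x))‖ := by rw [e.symm_apply_apply]
    _ ≤ ‖(e.symm : (E ⧸ N) →L[𝕜] (E ⧸ N))‖ * ‖e (N.mkQ x)‖ :=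
        (e.symm : (E ⧸ N) →L[𝕜] (E ⧸ N)).le_opNorm _

lemma H0set_subset_of_comap_eq [CompleteSpace X] (T : X →L[ℂ] X) {N : Submodule ℂ X}
    [IsClosed (N : Set X)] (hcomap : N.comap (T : X →ₗ[ℂ] X) = N)
    (hsup : LinearMap.range (T : X →ₗ[ℂ] X) ⊔ N = ⊤) : H0set T ⊆ N := by
  obtain ⟨C, hC0, hC⟩ := exists_norm_mkQ_le_mul_norm_mkQ_apply T hcomap hsup
  have hiter : ∀ n y, ‖N.mkQ y‖ ≤ C ^ n * ‖N.mkQ ((T ^ n) y)‖ := by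
    intro n
    induction n with
    | zero => simp
    | succ n ih =>
      intro y
      calc ‖N.mkQ y‖ ≤ C ^ n * ‖N.mkQ ((T ^ n) y)‖ := ih y
        _ ≤ C ^ n * (C * ‖N.mkQ (T ((T ^ n) y))‖) := by gcongr; exact hC _
        _ = C ^ (n + 1) * ‖N.mkQ ((T ^ (n + 1)) y)‖ := by
          rw [pow_succ' T n, mul_apply_eq_comp]; ring
  intro x hx
  set ρ : ℝ := (C + 1)⁻¹
  have hCρ : C * ρ < 1 := by
    rw [← div_eq_mul_inv, div_lt_one (by positivity)]
    exact lt_add_one C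
  have hle : ‖N.mkQ x‖ ≤ 0 := by
    refine ge_of_tendsto (tendsto_pow_atTop_nhds_zero_of_lt_one (by positivity) hCρ) ?_
    filter_upwards [mem_H0set_iff.1 hx ρ (by positivity)] with n hn
    calc ‖N.mkQ x‖ ≤ C ^ n * ‖N.mkQ ((T ^ n) x)‖ := hiter n x
      _ ≤ C ^ n * ρ ^ n := by
          gcongr
          exact (Submodule.Quotient.norm_mk_le _ _).trans hn
      _ = (C * ρ) ^ n := (mul_pow C ρ n).symm
  have hx0 := norm_le_zero_iff.1 hle
  rwa [Submodule.mkQ_apply, Submodule.Quotient.mk_eq_zero] at hx0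

lemma H0set_subset_ker_pow [CompleteSpace X] {T : X →L[ℂ] X} {q : ℕ}
    (hker : LinearMap.ker ((T : X →ₗ[ℂ] X) ^ q) = LinearMap.ker ((T : X →ₗ[ℂ] X) ^ (q + 1)))
    (hran : LinearMap.range ((T : X →ₗ[ℂ] X) ^ q) =
      LinearMap.range ((T : X →ₗ[ℂ] X) ^ (q + 1))) :
    H0set T ⊆ LinearMap.ker ((T : X →ₗ[ℂ] X) ^ q) := by
  have : IsClosed (LinearMap.ker ((T : X →ₗ[ℂ] X) ^ q) : Set X) := by
    rw [← ContinuousLinearMap.toLinearMap_pow]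
    exact ContinuousLinearMap.isClosed_ker _
  exact H0set_subset_of_comap_eq T (by rw [comap_ker_pow, ← hker])
    ((range_pow_eq_range_pow_succ_iff_sup_eq_top q).1 hran)

lemma sub_smul_one_mul_resolvent {R 𝔸 : Type*} [CommRing R] [Ring 𝔸] [Algebra R 𝔸] {a : 𝔸}
    {s t : R} (ht : t ∈ resolventSet R a) :
    (a - s • 1) * resolvent a t = (t - s) • resolvent a t - 1 := by
  have hinv : (t • 1 - a) * resolvent a t = 1 := by
    rw [← Algebra.algebraMap_eq_smul_one]
    exact Ring.mul_inverse_cancel _ ht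
  have hsplit : a - s • 1 = (t - s) • (1 : 𝔸) - (t • 1 - a) := by
    rw [sub_smul]
    abel
  rw [hsplit, sub_mul, hinv, smul_mul_assoc, one_mul]

lemma IsIsolatedPointOf.exists_ball_diff_subset_resolventSet {𝔸 : Type*} [Ring 𝔸] [Algebra ℂ 𝔸]
    {a : 𝔸} {lam : ℂ} (h : IsIsolatedPointOf lam (spectrum ℂ a)) :
    ∃ r > 0, ball lam r \ {lam} ⊆ resolventSet ℂ a := by
  obtain ⟨-, U, hU, hUs⟩ := h
  obtain ⟨r, hr, hball⟩ := Metric.mem_nhds_iff.1 hU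
  refine ⟨r, hr, fun z hz => spectrum.notMem_iff.1 fun hspec => hz.2 ?_⟩
  have hz' : z ∈ U ∩ spectrum ℂ a := ⟨hball hz.1, hspec⟩
  rwa [hUs] at hz'

lemma ContinuousLinearMap.circleIntegral_comp_comm {E F : Type*} [NormedAddCommGroup E]
    [NormedSpace ℂ E] [CompleteSpace E] [NormedAddCommGroup F] [NormedSpace ℂ F] [CompleteSpace F]
    (L : E →L[ℂ] F) {f : ℂ → E} {c : ℂ} {R : ℝ} (hf : CircleIntegrable f c R) :
    ∮ z in C(c, R), L (f z) = L (∮ z in C(c, R), f z) := by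
  simp only [circleIntegral, ← L.map_smul]
  exact L.intervalIntegral_comp_comm hf.out

lemma sphere_subset_ball_diff_singleton {lam : ℂ} {r ρ : ℝ} (hρ : ρ ∈ Ioo 0 r) :
    sphere lam ρ ⊆ ball lam r \ {lam} :=
  fun _ hz => ⟨sphere_subset_ball hρ.2 hz, ne_of_mem_sphere hz hρ.1.ne'⟩

section ResolventMoment

open Complex Real

variable {𝔸 : Type*} [NormedRing 𝔸] [NormedAlgebra ℂ 𝔸] {a : 𝔸} {lam : ℂ} {r ρ ρ' : ℝ}

/-- For `n = 0` this is the Riesz projection of `a` at `λ`. -/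
noncomputable def resolventMoment (a : 𝔸) (lam : ℂ) (ρ : ℝ) (n : ℤ) : 𝔸 :=
  (2 * π * I)⁻¹ • ∮ z in C(lam, ρ), (z - lam) ^ n • resolvent a z

lemma norm_resolventMoment_le {C : ℝ} (hρ : 0 ≤ ρ)
    (hC : ∀ z ∈ sphere lam ρ, ‖resolvent a z‖ ≤ C) (n : ℕ) :
    ‖resolventMoment a lam ρ n‖ ≤ ρ * (ρ ^ n * C) := by
  refine circleIntegral.norm_two_pi_i_inv_smul_integral_le_of_norm_le_const hρ fun z hz => ?_
  rw [norm_smul, zpow_natCast, norm_pow, ← dist_eq_norm, mem_sphere.1 hz]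
  gcongr
  exact hC z hz

variable [CompleteSpace 𝔸]

lemma differentiableOn_sub_zpow_smul_resolvent (hres : ball lam r \ {lam} ⊆ resolventSet ℂ a)
    (n : ℤ) :
    DifferentiableOn ℂ (fun z => (z - lam) ^ n • resolvent a z) (ball lam r \ {lam}) :=
  fun _ hz => (((differentiableAt_id.sub_const lam).zpow (Or.inl (sub_ne_zero.2 hz.2))).smul
    (spectrum.hasDerivAt_resolvent_const_left (hres hz)).differentiableAt).differentiableWithinAt

lemma circleIntegrable_sub_zpow_smul_resolvent (hres : ball lam r \ {lam} ⊆ resolventSet ℂ a)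
    (hρ : ρ ∈ Ioo 0 r) (n : ℤ) :
    CircleIntegrable (fun z => (z - lam) ^ n • resolvent a z) lam ρ :=
  ((differentiableOn_sub_zpow_smul_resolvent hres n).continuousOn.mono
    (sphere_subset_ball_diff_singleton hρ)).circleIntegrable hρ.1.le

lemma sub_smul_one_mul_resolventMoment (hres : ball lam r \ {lam} ⊆ resolventSet ℂ a)
    (hρ : ρ ∈ Ioo 0 r) (n : ℤ) :
    (a - lam • 1) * resolventMoment a lam ρ n = resolventMoment a lam ρ (n + 1) -
      ((2 * π * I)⁻¹ * ∮ z in C(lam, ρ), (z - lam) ^ n) • (1 : 𝔸) := by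
  have hne : ∀ z ∈ sphere lam ρ, z - lam ≠ 0 := fun z hz =>
    sub_ne_zero.2 (sphere_subset_ball_diff_singleton hρ hz).2
  have hcongr : EqOn (fun z => (a - lam • 1) * ((z - lam) ^ n • resolvent a z))
      (fun z => (z - lam) ^ (n + 1) • resolvent a z - (z - lam) ^ n • (1 : 𝔸))
      (sphere lam ρ) := fun z hz => by
    dsimp only
    rw [mul_smul_comm,
      sub_smul_one_mul_resolvent (hres (sphere_subset_ball_diff_singleton hρ hz)), smul_sub,
      smul_smul, ← zpow_add_one₀ (hne z hz)]
  have hint : CircleIntegrable (fun z => (z - lam) ^ n • (1 : 𝔸)) lam ρ :=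
    (((continuousOn_id.sub continuousOn_const).zpow₀ n fun z hz => Or.inl (hne z hz)).smul
      continuousOn_const).circleIntegrable hρ.1.le
  have hmul : (a - lam • 1) * (∮ z in C(lam, ρ), (z - lam) ^ n • resolvent a z) =
      ∮ z in C(lam, ρ), (a - lam • 1) * ((z - lam) ^ n • resolvent a z) :=
    ((ContinuousLinearMap.mul ℂ 𝔸 (a - lam • 1)).circleIntegral_comp_comm
      (circleIntegrable_sub_zpow_smul_resolvent hres hρ n)).symm
  rw [resolventMoment, resolventMoment, mul_smul_comm, hmul,
    circleIntegral.integral_congr hρ.1.le hcongr,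
    circleIntegral.integral_sub (circleIntegrable_sub_zpow_smul_resolvent hres hρ (n + 1)) hint,
    circleIntegral.integral_smul_const, smul_sub, mul_smul]

lemma sub_smul_one_mul_resolventMoment_of_ne (hres : ball lam r \ {lam} ⊆ resolventSet ℂ a)
    (hρ : ρ ∈ Ioo 0 r) {n : ℤ} (hn : n ≠ -1) :
    (a - lam • 1) * resolventMoment a lam ρ n = resolventMoment a lam ρ (n + 1) := by
  rw [sub_smul_one_mul_resolventMoment hres hρ, circleIntegral.integral_sub_zpow_of_ne hn,
    mul_zero, zero_smul, sub_zero]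

lemma sub_smul_one_mul_resolventMoment_neg_one (hres : ball lam r \ {lam} ⊆ resolventSet ℂ a)
    (hρ : ρ ∈ Ioo 0 r) :
    (a - lam • 1) * resolventMoment a lam ρ (-1) = resolventMoment a lam ρ 0 - 1 := by
  simp only [sub_smul_one_mul_resolventMoment hres hρ, zpow_neg_one,
    circleIntegral.integral_sub_inv_of_mem_ball (mem_ball_self hρ.1),
    inv_mul_cancel₀ two_pi_I_ne_zero, one_smul, neg_add_cancel]

lemma sub_smul_one_pow_mul_resolventMoment_zero (hres : ball lam r \ {lam} ⊆ resolventSet ℂ a)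
    (hρ : ρ ∈ Ioo 0 r) (n : ℕ) :
    (a - lam • 1) ^ n * resolventMoment a lam ρ 0 = resolventMoment a lam ρ n := by
  induction n with
  | zero => simp
  | succ n ih =>
    rw [pow_succ', mul_assoc, ih, sub_smul_one_mul_resolventMoment_of_ne hres hρ (by omega)]
    push_cast
    rfl

lemma resolventMoment_congr_radius (hres : ball lam r \ {lam} ⊆ resolventSet ℂ a)
    (hρ : ρ ∈ Ioo 0 r) (hρ' : ρ' ∈ Ioo 0 r) (n : ℤ) :
    resolventMoment a lam ρ n = resolventMoment a lam ρ' n := by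
  wlog hle : ρ' ≤ ρ generalizing ρ ρ'
  · exact (this hρ' hρ (le_of_not_ge hle)).symm
  have hann : closedBall lam ρ \ ball lam ρ' ⊆ ball lam r \ {lam} := fun z hz =>
    ⟨closedBall_subset_ball hρ.2 hz.1, fun h => hz.2 (h ▸ mem_ball_self hρ'.1)⟩
  have hdiff := differentiableOn_sub_zpow_smul_resolvent hres n
  rw [resolventMoment, resolventMoment,
    Complex.circleIntegral_eq_of_differentiable_on_annulus_off_countable hρ'.1 hle countable_empty
      (hdiff.continuousOn.mono hann) fun z hz => hdiff.differentiableAt ?_]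
  exact (isOpen_ball.sdiff isClosed_singleton).mem_nhds
    (hann (sdiff_subset_sdiff ball_subset_closedBall ball_subset_closedBall hz.1))

lemma exists_norm_sub_smul_one_pow_mul_resolventMoment_le
    (hres : ball lam r \ {lam} ⊆ resolventSet ℂ a) (hρ : ρ ∈ Ioo 0 r) (hρ' : ρ' ∈ Ioo 0 r) :
    ∃ C, ∀ n : ℕ, ‖(a - lam • 1) ^ n * resolventMoment a lam ρ 0‖ ≤ C * ρ' ^ n := by
  obtain ⟨C, hC⟩ := (isCompact_sphere lam ρ').exists_bound_of_continuousOn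
    fun z hz => (spectrum.hasDerivAt_resolvent_const_left
      (hres (sphere_subset_ball_diff_singleton hρ' hz))).continuousAt.continuousWithinAt
  refine ⟨ρ' * C, fun n => ?_⟩
  rw [sub_smul_one_pow_mul_resolventMoment_zero hres hρ, resolventMoment_congr_radius hres hρ hρ']
  exact (norm_resolventMoment_le hρ'.1.le hC n).trans_eq (by ring)

end ResolventMoment

lemma resolventMoment_zero_apply_mem_H0set [CompleteSpace X] {A : X →L[ℂ] X} {lam : ℂ}
    {r ρ : ℝ} (hres : ball lam r \ {lam} ⊆ resolventSet ℂ A) (hρ : ρ ∈ Ioo 0 r) (x : X) :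
    resolventMoment A lam ρ 0 x ∈ H0set (A - lam • 1) := by
  refine mem_H0set_iff.2 (eventually_le_pow_of_le_mul_pow ?_)
  filter_upwards [Ioo_mem_nhdsGT (hρ.1.trans hρ.2)] with ρ' hρ'
  obtain ⟨C, hC⟩ := exists_norm_sub_smul_one_pow_mul_resolventMoment_le hres hρ hρ'
  refine ⟨C * ‖x‖, fun n => ?_⟩
  calc ‖((A - lam • 1) ^ n) (resolventMoment A lam ρ 0 x)‖
      = ‖((A - lam • 1) ^ n * resolventMoment A lam ρ 0) x‖ := rfl
    _ ≤ ‖(A - lam • 1) ^ n * resolventMoment A lam ρ 0‖ * ‖x‖ :=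
        ContinuousLinearMap.le_opNorm _ _
    _ ≤ C * ρ' ^ n * ‖x‖ := by gcongr; exact hC n
    _ = C * ‖x‖ * ρ' ^ n := by ring

lemma exists_sub_apply_mem_H0set [CompleteSpace X] {A : X →L[ℂ] X} {lam : ℂ}
    (hiso : IsIsolatedPointOf lam (spectrum ℂ A)) (x : X) :
    ∃ y, x - (A - lam • 1) y ∈ H0set (A - lam • 1) := by
  obtain ⟨r, hr, hres⟩ := hiso.exists_ball_diff_subset_resolventSet
  have hρ : r / 2 ∈ Ioo 0 r := ⟨half_pos hr, half_lt_self hr⟩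
  refine ⟨-resolventMoment A lam (r / 2) (-1) x, ?_⟩
  have hP : x - (A - lam • 1) (-resolventMoment A lam (r / 2) (-1) x) =
      resolventMoment A lam (r / 2) 0 x := by
    rw [map_neg, sub_neg_eq_add, ← mul_apply_eq_comp,
      sub_smul_one_mul_resolventMoment_neg_one hres hρ, sub_apply,
      one_apply_eq_self, add_sub_cancel]
  rw [hP]
  exact resolventMoment_zero_apply_mem_H0set hres hρ x

/-- For an isolated point `lam` of `σ(A)`: `lam` is a pole of `A` if and only if
`H₀(A - lam) = ker (A - lam)^p` for some integer `p ≥ 1`. -/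
theorem isPoleOf_iff_H0_eq_ker_pow
    {X : Type*} [NormedAddCommGroup X] [NormedSpace ℂ X] [CompleteSpace X]
    (A : X →L[ℂ] X) (lam : ℂ) (hiso : IsIsolatedPointOf lam (spectrum ℂ A)) :
    IsPoleOf A lam ↔
      ∃ p : ℕ, 1 ≤ p ∧
        H0set (A - lam • 1) = (LinearMap.ker (((A - lam • 1) ^ p : X →L[ℂ] X) : X →ₗ[ℂ] X) : Set X) := by
  set T := A - lam • 1
  simp only [ContinuousLinearMap.toLinearMap_pow]
  constructor
  · rintro ⟨-, hasc, hfin⟩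
    obtain ⟨q, hq⟩ := ENat.ne_top_iff_exists.1 hfin
    have hker := (ascent_le_iff T q).1 hq.ge
    have hran := (descent_le_iff T q).1 (hq.trans hasc).ge
    refine ⟨max q 1, le_max_right q 1, subset_antisymm ?_ (ker_pow_subset_H0set T _)⟩
    exact (H0set_subset_ker_pow hker hran).trans
      ((T : X →ₗ[ℂ] X).iterateKer.monotone (le_max_left q 1))
  · rintro ⟨p, -, hp⟩
    have hker :
        LinearMap.ker ((T : X →ₗ[ℂ] X) ^ p) = LinearMap.ker ((T : X →ₗ[ℂ] X) ^ (p + 1)) :=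
      le_antisymm ((T : X →ₗ[ℂ] X).iterateKer.monotone p.le_succ) fun x hx => by
        simpa [hp] using ker_pow_subset_H0set T (p + 1) hx
    have hran : LinearMap.range ((T : X →ₗ[ℂ] X) ^ p) =
        LinearMap.range ((T : X →ₗ[ℂ] X) ^ (p + 1)) := by
      refine (range_pow_eq_range_pow_succ_iff_sup_eq_top p).2 (eq_top_iff.2 fun x _ => ?_)
      obtain ⟨y, hy⟩ := exists_sub_apply_mem_H0set hiso x
      rw [hp] at hy
      exact Submodule.mem_sup.2 ⟨T y, LinearMap.mem_range_self _ y, _, hy, add_sub_cancel _ _⟩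
    have hasc := (ascent_le_iff T p).2 hker
    exact ⟨hiso, ascent_eq_descent_of_le hasc ((descent_le_iff T p).2 hran),
      ne_top_of_le_ne_top (ENat.natCast_ne_top p) hasc⟩
end
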